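/- arXiv:2008.12744 — 2 statements merged into one kernel-verified Lean document; each statement's English description precedes it below -/
import Mathlib

section
/- Let x^k, y^k ≥ 0 and admissible controls r^k (k ∈ ℕ) be such that x^k → x^∞, y^k → y^∞ as k → ∞, and r^k → r^∞ weak* in L^∞([0,∞)), i.e. ∫₀^∞ g(t) r^k(t) dt → ∫₀^∞ g(t) r^∞(t) dt for every integrable g : [0,∞) → ℝ. Let S^k, I^k be the solution of the controlled SIR system with control r^k and initial data (x^k, y^k), and let S^∞, I^∞ be the solution with control r^∞ and initial data (x^∞, y^∞). Then S^k(t) → S^∞(t) and I^k(t) → I^∞(t) uniformly for t in every bounded subinterval of [0,∞). -/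
open MeasureTheory Set Filter Topology
open scoped Classical

noncomputable section

/-- An admissible vaccination-rate control: a measurable `r : ℝ → ℝ` with
`0 ≤ r t ≤ 1` for a.e. `t ≥ 0`. -/
def Admissible (r : ℝ → ℝ) : Prop :=
  Measurable r ∧ ∀ᵐ t : ℝ ∂volume, 0 ≤ t → 0 ≤ r t ∧ r t ≤ 1

/-- `S, I` is a solution of the controlled SIR system with parameters `β, γ`,
control `r`, and initial data `x, y`:  they are continuous on `[0,∞)` and satisfy
`S t = x - ∫₀ᵗ (β S I + r S)` and `I t = y + ∫₀ᵗ (β S I - γ I)` for all `t ≥ 0`. -/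
def IsSIRSol (β γ : ℝ) (r : ℝ → ℝ) (x y : ℝ) (S I : ℝ → ℝ) : Prop :=
  ContinuousOn S (Ici 0) ∧ ContinuousOn I (Ici 0) ∧
  (∀ t : ℝ, 0 ≤ t → S t = x - ∫ s in (0:ℝ)..t, (β * S s * I s + r s * S s)) ∧
  (∀ t : ℝ, 0 ≤ t → I t = y + ∫ s in (0:ℝ)..t, (β * S s * I s - γ * I s))

/-- The susceptible component `S^r` of the solution of the controlled SIR system
(chosen via choice; it is unique on `[0,∞)`). -/
def sirS (β γ : ℝ) (r : ℝ → ℝ) (x y : ℝ) : ℝ → ℝ :=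
  if h : ∃ p : (ℝ → ℝ) × (ℝ → ℝ), IsSIRSol β γ r x y p.1 p.2 then h.choose.1 else 0

/-- The infected component `I^r` of the solution of the controlled SIR system. -/
def sirI (β γ : ℝ) (r : ℝ → ℝ) (x y : ℝ) : ℝ → ℝ :=
  if h : ∃ p : (ℝ → ℝ) × (ℝ → ℝ), IsSIRSol β γ r x y p.1 p.2 then h.choose.2 else 0

/-- The eradication time `u^r(x,y) = min { t ≥ 0 : I^r(t) = μ }`. -/
def eradTime (β γ μ : ℝ) (r : ℝ → ℝ) (x y : ℝ) : ℝ :=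
  sInf {t : ℝ | 0 ≤ t ∧ sirI β γ r x y t = μ}

/-- The value function `u(x,y) = inf { u^r(x,y) : r admissible }`. -/
def value (β γ μ : ℝ) (x y : ℝ) : ℝ :=
  sInf {T : ℝ | ∃ r : ℝ → ℝ, Admissible r ∧ T = eradTime β γ μ r x y}

/-- The triangle `T_{N,δ} = {(x,y) : x ≥ δ, y ≥ μ + δ, x + y ≤ N}`. -/
def Triangle (μ N δ : ℝ) : Set (ℝ × ℝ) :=
  {p : ℝ × ℝ | δ ≤ p.1 ∧ μ + δ ≤ p.2 ∧ p.1 + p.2 ≤ N}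

/-- The partial derivative `∂ₓ u^r(z,w)` of the eradication time. -/
def uDx (β γ μ : ℝ) (r : ℝ → ℝ) (z w : ℝ) : ℝ :=
  deriv (fun a => eradTime β γ μ r a w) z

/-- The partial derivative `∂_y u^r(z,w)` of the eradication time. -/
def uDy (β γ μ : ℝ) (r : ℝ → ℝ) (z w : ℝ) : ℝ :=
  deriv (fun b => eradTime β γ μ r z b) w

/-- The switching control `r_τ`: `0` on `[0,τ]` and `1` on `(τ,∞)`. -/
def switchCtrl (τ : ℝ) : ℝ → ℝ := fun t => if t ≤ τ then 0 else 1

/-!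
`S` and `I` solve linear integral equations `u = u₀ + ∫ a u` with locally bounded coefficients.
By Grönwall's inequality such a `u` that vanishes at some time vanishes afterwards, so by the
intermediate value theorem it cannot become negative when `u₀ ≥ 0`. Hence `0 ≤ I` and
`0 ≤ S ≤ x`, and the susceptible components are bounded uniformly in `k`.
Subtracting the integral equations of the `k`-th and limit solutions, every term is Lipschitz in
`(S, I)` except `∫₀ᵗ (r^k - r^∞) S^∞`. Weak* convergence tested against `𝟙_(0,t] S^∞` makes
this term tend to `0` for each `t`; it is `‖S^∞‖_∞`-Lipschitz in `t` uniformly in `k`, hence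
tends to `0` uniformly on `[0, T]`, and Grönwall's inequality turns this into uniform convergence
of `(S, I)`.
-/

open Real

theorem le_mul_exp_of_le_add_mul_integral {f : ℝ → ℝ} {δ K c d : ℝ} (hK : 0 ≤ K)
    (hf : ContinuousOn f (Icc c d)) (hle : ∀ t ∈ Icc c d, f t ≤ δ + K * ∫ s in c..t, f s) :
    ∀ t ∈ Icc c d, f t ≤ δ * exp (K * (t - c)) := by
  set F : ℝ → ℝ := fun t => δ + K * ∫ s in c..t, f s
  have hsub : ∀ t ∈ Icc c d, uIcc c t ⊆ Icc c d := fun t ht =>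
    uIcc_subset_Icc (left_mem_Icc.2 (ht.1.trans ht.2)) ht
  have hFcont : ContinuousOn F (Icc c d) := by
    by_cases hcd : c ≤ d
    · refine continuousOn_const.add (continuousOn_const.mul ?_)
      rw [← uIcc_of_le hcd]
      exact intervalIntegral.continuousOn_primitive_interval
        ((uIcc_of_le hcd).symm ▸ hf.integrableOn_Icc)
    · simp [Icc_eq_empty hcd]
  have hFderiv : ∀ t ∈ Ico c d, HasDerivWithinAt F (K * f t) (Ici t) t := by
    intro t ht
    have hmem : Icc c d ∈ 𝓝[>] t :=
      mem_of_superset (Ioo_mem_nhdsGT ht.2) (Ioo_subset_Icc_self.trans (Icc_subset_Icc_left ht.1))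
    have hcont : ContinuousWithinAt f (Ioi t) t :=
      (hf t (Ico_subset_Icc_self ht)).mono_of_mem_nhdsWithin hmem
    refine ((intervalIntegral.integral_hasDerivWithinAt_right
      ((hf.mono (hsub t (Ico_subset_Icc_self ht))).intervalIntegrable) ?_ hcont).const_mul
        K).const_add δ
    exact (hf.stronglyMeasurableAtFilter_nhdsWithin measurableSet_Icc t).filter_mono
      (nhdsWithin_le_of_mem hmem)
  intro t ht
  calc f t ≤ F t := hle t ht
    _ ≤ gronwallBound δ K 0 (t - c) :=
      le_gronwallBound_of_liminf_deriv_right_le hFcont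
        (fun t ht _ hr => (hFderiv t ht).liminf_right_slope_le hr) (by simp [F])
        (fun t ht => by simpa using mul_le_mul_of_nonneg_left (hle t (Ico_subset_Icc_self ht)) hK)
        t ht
    _ = δ * exp (K * (t - c)) := gronwallBound_ε0 δ K (t - c)

theorem eqOn_zero_of_eq_integral_mul {u a : ℝ → ℝ} {C c d : ℝ}
    (hu : ContinuousOn u (Icc c d)) (ha : ∀ᵐ s, s ∈ Icc c d → |a s| ≤ C)
    (heq : ∀ t ∈ Icc c d, u t = ∫ s in c..t, a s * u s) : EqOn u 0 (Icc c d) := by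
  have hbound : ∀ t ∈ Icc c d, |u t| ≤ 0 + max C 0 * ∫ s in c..t, |u s| := by
    intro t ht
    rw [heq t ht, zero_add, ← intervalIntegral.integral_const_mul]
    refine intervalIntegral.norm_integral_le_of_norm_le (f := fun s => a s * u s) ht.1 ?_
      ((continuousOn_const.mul (hu.mono (Icc_subset_Icc_right ht.2)).abs).intervalIntegrable_of_Icc
        ht.1)
    filter_upwards [ha] with s hs hs'
    rw [norm_mul, Real.norm_eq_abs, Real.norm_eq_abs]
    exact mul_le_mul_of_nonneg_right ((hs ⟨hs'.1.le, hs'.2.trans ht.2⟩).trans (le_max_left _ _))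
      (abs_nonneg _)
  intro t ht
  simpa using le_mul_exp_of_le_add_mul_integral (le_max_right C 0) hu.abs hbound t ht

theorem nonneg_of_eq_add_integral_mul {u a : ℝ → ℝ} {u₀ C c d : ℝ}
    (hu : ContinuousOn u (Icc c d)) (ha : ∀ᵐ s, s ∈ Icc c d → |a s| ≤ C)
    (hau : IntervalIntegrable (fun s => a s * u s) volume c d)
    (heq : ∀ t ∈ Icc c d, u t = u₀ + ∫ s in c..t, a s * u s) (h₀ : 0 ≤ u₀) :
    ∀ t ∈ Icc c d, 0 ≤ u t := by
  intro t ht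
  by_contra! hneg
  have hc : u c = u₀ := by simpa using heq c (left_mem_Icc.2 (ht.1.trans ht.2))
  obtain ⟨t₀, ht₀, hzero⟩ : 0 ∈ u '' Icc c t :=
    intermediate_value_Icc' ht.1 (hu.mono (Icc_subset_Icc_right ht.2)) ⟨hneg.le, hc ▸ h₀⟩
  have hsub : Icc t₀ t ⊆ Icc c d := Icc_subset_Icc ht₀.1 ht.2
  have hint : ∀ s ∈ Icc c d, IntervalIntegrable (fun s => a s * u s) volume c s := fun s hs =>
    hau.mono_set (by
      rw [uIcc_of_le hs.1, uIcc_of_le (hs.1.trans hs.2)]; exact Icc_subset_Icc_right hs.2)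
  have ht₀' : t₀ ∈ Icc c d := hsub ⟨le_rfl, ht₀.2⟩
  refine hneg.ne (eqOn_zero_of_eq_integral_mul (hu.mono hsub)
    (ha.mono fun s hs hs' => hs (hsub hs')) (fun s hs => ?_) ⟨ht₀.2, le_rfl⟩)
  rw [← intervalIntegral.integral_interval_sub_left (hint s (hsub hs)) (hint t₀ ht₀')]
  linarith [heq s (hsub hs), heq t₀ ht₀']

theorem tendstoUniformlyOn_of_equicontinuousOn {ι X α : Type*} [TopologicalSpace X]
    [UniformSpace α] {F : ι → X → α} {f : X → α} {p : Filter ι} {K : Set X}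
    (hK : IsCompact K) (hF : EquicontinuousOn F K)
    (h : ∀ x ∈ K, Tendsto (fun i => F i x) p (𝓝 (f x))) : TendstoUniformlyOn F f p K := by
  have := (EquicontinuousOn.tendsto_uniformOnFun_iff_pi' (𝔖 := {K}) (by simpa using hK)
    (by simpa using hF) p f).2 ?_
  · exact UniformOnFun.tendsto_iff_tendstoUniformlyOn.1 this K rfl
  · rw [tendsto_pi_nhds]
    rintro ⟨x, hx⟩
    simpa using h x (by simpa using hx)

theorem tendstoUniformlyOn_of_abs_sub_le {ι α : Type*} {l : Filter ι} {F D : ι → α → ℝ}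
    {f : α → ℝ} {s : Set α} (hD : ∀ ε > 0, ∀ᶠ k in l, ∀ t ∈ s, D k t < ε)
    (hle : ∀ k, ∀ t ∈ s, |F k t - f t| ≤ D k t) : TendstoUniformlyOn F f l s :=
  Metric.tendstoUniformlyOn_iff.2 fun ε hε => (hD ε hε).mono fun k hk t ht => by
    rw [dist_comm, Real.dist_eq]; exact (hle k t ht).trans_lt (hk t ht)

theorem abs_mul_sub_mul_le {a b a' b' B : ℝ} (ha : |a| ≤ B) (hb' : |b'| ≤ B) :
    |a * b - a' * b'| ≤ B * (|a - a'| + |b - b'|) := by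
  calc |a * b - a' * b'| = |b' * (a - a') + a * (b - b')| := by congr 1; ring
    _ ≤ |b'| * |a - a'| + |a| * |b - b'| := by
        rw [← abs_mul, ← abs_mul]; exact abs_add_le _ _
    _ ≤ B * |a - a'| + B * |b - b'| := by gcongr
    _ = B * (|a - a'| + |b - b'|) := by ring

theorem Admissible.ae_abs_le_one {r : ℝ → ℝ} (hr : Admissible r) :
    ∀ᵐ t : ℝ, 0 ≤ t → |r t| ≤ 1 :=
  hr.2.mono fun _ h ht => abs_le.2 ⟨by linarith [(h ht).1], (h ht).2⟩

theorem Admissible.ae_abs_sub_le_one {r r' : ℝ → ℝ} (hr : Admissible r)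
    (hr' : Admissible r') : ∀ᵐ t : ℝ, 0 ≤ t → |r t - r' t| ≤ 1 := by
  filter_upwards [hr.2, hr'.2] with t h h' ht
  exact abs_sub_le_iff.2 ⟨by linarith [(h ht).2, (h' ht).1], by linarith [(h ht).1, (h' ht).2]⟩

theorem Admissible.intervalIntegrable_mul {r f : ℝ → ℝ} (hr : Admissible r) {a b : ℝ}
    (ha : 0 ≤ a) (hb : 0 ≤ b) (hf : ContinuousOn f (uIcc a b)) :
    IntervalIntegrable (fun t => r t * f t) volume a b := by
  rw [intervalIntegrable_iff]
  refine (hf.integrableOn_uIcc.mono_set uIoc_subset_uIcc).bdd_mul (c := 1)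
    hr.1.aestronglyMeasurable.restrict ((ae_restrict_iff' measurableSet_uIoc).2 ?_)
  filter_upwards [hr.ae_abs_le_one] with t h ht
  exact h ((le_min ha hb).trans ht.1.le)

theorem Admissible.intervalIntegrable_sub_mul {r r' f : ℝ → ℝ} (hr : Admissible r)
    (hr' : Admissible r') {a b : ℝ} (ha : 0 ≤ a) (hb : 0 ≤ b)
    (hf : ContinuousOn f (uIcc a b)) :
    IntervalIntegrable (fun t => (r t - r' t) * f t) volume a b := by
  simpa only [sub_mul] using (hr.intervalIntegrable_mul ha hb hf).sub
    (hr'.intervalIntegrable_mul ha hb hf)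

theorem Admissible.lipschitzOnWith_integral_sub_mul {r r' f : ℝ → ℝ} (hr : Admissible r)
    (hr' : Admissible r') {C : NNReal} {T : ℝ} (hf : ContinuousOn f (Icc 0 T))
    (hC : ∀ t ∈ Icc 0 T, |f t| ≤ C) :
    LipschitzOnWith C (fun t => ∫ s in 0..t, (r s - r' s) * f s) (Icc 0 T) := by
  have hint : ∀ t ∈ Icc 0 T, IntervalIntegrable (fun s => (r s - r' s) * f s) volume 0 t :=
    fun t ht => hr.intervalIntegrable_sub_mul hr' le_rfl ht.1
      (hf.mono (uIcc_subset_Icc (left_mem_Icc.2 (ht.1.trans ht.2)) ht))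
  refine LipschitzOnWith.of_dist_le_mul fun t ht t' ht' => ?_
  rw [Real.dist_eq, Real.dist_eq,
    intervalIntegral.integral_interval_sub_left (hint t ht) (hint t' ht')]
  refine intervalIntegral.norm_integral_le_of_norm_le_const_ae
    (f := fun s => (r s - r' s) * f s) ?_
  filter_upwards [hr.ae_abs_sub_le_one hr'] with s hs hmem
  have hmem' : s ∈ Icc 0 T := uIcc_subset_Icc ht' ht (uIoc_subset_uIcc hmem)
  rw [norm_mul, Real.norm_eq_abs, Real.norm_eq_abs, ← one_mul (C : ℝ)]
  exact mul_le_mul (hs hmem'.1) (hC s hmem') (abs_nonneg _) zero_le_one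

section WeakStar

variable {ι : Type*} {l : Filter ι} {r : ι → ℝ → ℝ} {rl : ℝ → ℝ}

theorem tendsto_integral_sub_mul_of_weakStar (hr : ∀ k, Admissible (r k)) (hrl : Admissible rl)
    (hweak : ∀ g : ℝ → ℝ, Integrable g (volume.restrict (Ici 0)) →
      Tendsto (fun k => ∫ t in Ici (0:ℝ), g t * r k t) l (𝓝 (∫ t in Ici (0:ℝ), g t * rl t)))
    {f : ℝ → ℝ} {t : ℝ} (ht : 0 ≤ t) (hf : ContinuousOn f (Icc 0 t)) :
    Tendsto (fun k => ∫ s in 0..t, (r k s - rl s) * f s) l (𝓝 0) := by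
  have hsub : Ici (0 : ℝ) ∩ Ioc 0 t = Ioc 0 t := inter_eq_right.2 fun s hs => hs.1.le
  have hg : Integrable ((Ioc 0 t).indicator f) (volume.restrict (Ici 0)) := by
    rw [integrable_indicator_iff measurableSet_Ioc, IntegrableOn,
      Measure.restrict_restrict measurableSet_Ioc, inter_comm, hsub]
    exact hf.integrableOn_Icc.mono_set Ioc_subset_Icc_self
  have hkey : ∀ ρ : ℝ → ℝ,
      ∫ s in Ici 0, (Ioc 0 t).indicator f s * ρ s = ∫ s in 0..t, f s * ρ s := by
    intro ρ
    simp_rw [← indicator_mul_left]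
    rw [setIntegral_indicator measurableSet_Ioc, hsub, intervalIntegral.integral_of_le ht]
  have hint : ∀ ρ : ℝ → ℝ, Admissible ρ → IntervalIntegrable (fun s => f s * ρ s) volume 0 t :=
    fun ρ hρ => by
      simpa only [mul_comm (ρ _)] using
        hρ.intervalIntegrable_mul le_rfl ht (by rwa [uIcc_of_le ht])
  have hconv := hweak _ hg
  simp only [hkey] at hconv
  refine (tendsto_sub_nhds_zero_iff.2 hconv).congr fun k => ?_
  rw [← intervalIntegral.integral_sub (hint _ (hr k)) (hint _ hrl)]
  exact intervalIntegral.integral_congr fun s _ => by ring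

theorem tendstoUniformlyOn_integral_sub_mul_of_weakStar (hr : ∀ k, Admissible (r k))
    (hrl : Admissible rl)
    (hweak : ∀ g : ℝ → ℝ, Integrable g (volume.restrict (Ici 0)) →
      Tendsto (fun k => ∫ t in Ici (0:ℝ), g t * r k t) l (𝓝 (∫ t in Ici (0:ℝ), g t * rl t)))
    {f : ℝ → ℝ} {T : ℝ} (hf : ContinuousOn f (Icc 0 T)) :
    TendstoUniformlyOn (fun k t => ∫ s in 0..t, (r k s - rl s) * f s) 0 l (Icc 0 T) := by
  obtain ⟨C, hC⟩ := isCompact_Icc.exists_bound_of_continuousOn hf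
  refine tendstoUniformlyOn_of_equicontinuousOn isCompact_Icc
    (LipschitzOnWith.uniformEquicontinuousOn _ C.toNNReal fun k =>
      (hr k).lipschitzOnWith_integral_sub_mul hrl hf fun t ht =>
        (hC t ht).trans (Real.le_coe_toNNReal C)).equicontinuousOn
    fun t ht => tendsto_integral_sub_mul_of_weakStar hr hrl hweak ht.1
      (hf.mono (Icc_subset_Icc_right ht.2))

end WeakStar

namespace IsSIRSol

variable {β γ : ℝ} {r r' : ℝ → ℝ} {x x' y y' : ℝ} {S I S' I' : ℝ → ℝ} {B T : ℝ}

theorem intervalIntegrable_susceptible (h : IsSIRSol β γ r x y S I) (hr : Admissible r)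
    {a b : ℝ} (ha : 0 ≤ a) (hb : 0 ≤ b) :
    IntervalIntegrable (fun s => β * S s * I s + r s * S s) volume a b := by
  have hsub : uIcc a b ⊆ Ici 0 := fun s hs => (le_min ha hb).trans hs.1
  exact ((continuousOn_const.mul (h.1.mono hsub)).mul (h.2.1.mono hsub)).intervalIntegrable.add
    (hr.intervalIntegrable_mul ha hb (h.1.mono hsub))

theorem intervalIntegrable_infected (h : IsSIRSol β γ r x y S I) {a b : ℝ} (ha : 0 ≤ a)
    (hb : 0 ≤ b) : IntervalIntegrable (fun s => β * S s * I s - γ * I s) volume a b := by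
  have hsub : uIcc a b ⊆ Ici 0 := fun s hs => (le_min ha hb).trans hs.1
  exact (((continuousOn_const.mul (h.1.mono hsub)).mul (h.2.1.mono hsub)).sub
    (continuousOn_const.mul (h.2.1.mono hsub))).intervalIntegrable

theorem infected_nonneg (h : IsSIRSol β γ r x y S I) (hy : 0 ≤ y) {t : ℝ} (ht : 0 ≤ t) :
    0 ≤ I t := by
  obtain ⟨C, hC⟩ :=
    isCompact_Icc.exists_bound_of_continuousOn (h.1.mono (Icc_subset_Ici_self : Icc 0 t ⊆ Ici 0))
  have hform : (fun s => β * S s * I s - γ * I s) = fun s => (β * S s - γ) * I s := by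
    funext s; ring
  refine nonneg_of_eq_add_integral_mul (C := |β| * C + |γ|) (h.2.1.mono Icc_subset_Ici_self)
    (Eventually.of_forall fun s hs => ?_) (hform ▸ h.intervalIntegrable_infected le_rfl ht)
    (fun s hs => ?_) hy t ⟨ht, le_rfl⟩
  · calc |β * S s - γ| ≤ |β| * |S s| + |γ| := by simpa [abs_mul] using abs_sub (β * S s) γ
      _ ≤ |β| * C + |γ| := by gcongr; exact hC s hs
  · rw [← hform]; exact h.2.2.2 s hs.1

theorem susceptible_nonneg (h : IsSIRSol β γ r x y S I) (hr : Admissible r) (hx : 0 ≤ x)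
    {t : ℝ} (ht : 0 ≤ t) : 0 ≤ S t := by
  obtain ⟨C, hC⟩ :=
    isCompact_Icc.exists_bound_of_continuousOn (h.2.1.mono (Icc_subset_Ici_self : Icc 0 t ⊆ Ici 0))
  have hform : (fun s => -(β * I s + r s) * S s) = fun s => -(β * S s * I s + r s * S s) := by
    funext s; ring
  refine nonneg_of_eq_add_integral_mul (C := |β| * C + 1) (h.1.mono Icc_subset_Ici_self) ?_
    (by rw [hform]; exact (h.intervalIntegrable_susceptible hr le_rfl ht).neg) (fun s hs => ?_) hx
    t ⟨ht, le_rfl⟩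
  · filter_upwards [hr.ae_abs_le_one] with s hr1 hs
    calc |-(β * I s + r s)| ≤ |β| * |I s| + |r s| := by
          rw [abs_neg, ← abs_mul]; exact abs_add_le _ _
      _ ≤ |β| * C + 1 := by gcongr; exacts [hC s hs, hr1 hs.1]
  · rw [hform, intervalIntegral.integral_neg, ← sub_eq_add_neg]; exact h.2.2.1 s hs.1

theorem susceptible_le (h : IsSIRSol β γ r x y S I) (hβ : 0 ≤ β) (hr : Admissible r)
    (hx : 0 ≤ x) (hy : 0 ≤ y) {t : ℝ} (ht : 0 ≤ t) : S t ≤ x := by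
  rw [h.2.2.1 t ht, sub_le_self_iff]
  refine intervalIntegral.integral_nonneg_of_ae_restrict ht
    ((ae_restrict_iff' measurableSet_Icc).2 ?_)
  filter_upwards [hr.2] with s hrs hs
  have hS := h.susceptible_nonneg hr hx hs.1
  have hI := h.infected_nonneg hy hs.1
  have hr0 := (hrs hs.1).1
  positivity

theorem abs_susceptible_le (h : IsSIRSol β γ r x y S I) (hβ : 0 ≤ β) (hr : Admissible r)
    (hx : 0 ≤ x) (hy : 0 ≤ y) {t : ℝ} (ht : 0 ≤ t) : |S t| ≤ x :=
  abs_le.2 ⟨by linarith [h.susceptible_nonneg hr hx ht], h.susceptible_le hβ hr hx hy ht⟩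

theorem continuousOn_abs_sub_add_abs_sub (h : IsSIRSol β γ r x y S I)
    (h' : IsSIRSol β γ r' x' y' S' I') :
    ContinuousOn (fun s => |S s - S' s| + |I s - I' s|) (Ici 0) :=
  (h.1.sub h'.1).abs.add (h.2.1.sub h'.2.1).abs

theorem abs_susceptible_sub_le (h : IsSIRSol β γ r x y S I) (h' : IsSIRSol β γ r' x' y' S' I')
    (hr : Admissible r) (hr' : Admissible r') (hS : ∀ t ∈ Icc 0 T, |S t| ≤ B)
    (hI' : ∀ t ∈ Icc 0 T, |I' t| ≤ B) {u : ℝ} (hu : u ∈ Icc 0 T) :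
    |S u - S' u| ≤ |x - x'| + |∫ s in 0..u, (r s - r' s) * S' s|
      + (|β| * B + 1) * ∫ s in 0..u, (|S s - S' s| + |I s - I' s|) := by
  have hsub : uIcc 0 u ⊆ Ici 0 := fun s hs => (le_min le_rfl hu.1).trans hs.1
  set F : ℝ → ℝ := fun s => β * S s * I s + r s * S s
  set F' : ℝ → ℝ := fun s => β * S' s * I' s + r' s * S' s
  set G : ℝ → ℝ := fun s => (r s - r' s) * S' s
  have hF := h.intervalIntegrable_susceptible hr le_rfl hu.1
  have hF' := h'.intervalIntegrable_susceptible hr' le_rfl hu.1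
  have hG : IntervalIntegrable G volume 0 u :=
    hr.intervalIntegrable_sub_mul hr' le_rfl hu.1 (h'.1.mono hsub)
  have hsplit :
      S u - S' u = (x - x') - (∫ s in 0..u, (F s - F' s - G s)) - ∫ s in 0..u, G s := by
    rw [intervalIntegral.integral_sub (hF.sub hF') hG, intervalIntegral.integral_sub hF hF',
      h.2.2.1 u hu.1, h'.2.2.1 u hu.1]
    ring
  have hbound : |∫ s in 0..u, (F s - F' s - G s)|
      ≤ (|β| * B + 1) * ∫ s in 0..u, (|S s - S' s| + |I s - I' s|) := by
    rw [← intervalIntegral.integral_const_mul]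
    refine intervalIntegral.norm_integral_le_of_norm_le
      (f := fun s => F s - F' s - G s)
      (g := fun s => (|β| * B + 1) * (|S s - S' s| + |I s - I' s|)) hu.1 ?_
      (continuousOn_const.mul ((h.continuousOn_abs_sub_add_abs_sub h').mono
        hsub)).intervalIntegrable
    filter_upwards [hr.ae_abs_le_one] with s hrs hs
    have hs' : s ∈ Icc 0 T := ⟨hs.1.le, hs.2.trans hu.2⟩
    have hprod := abs_mul_sub_mul_le (b := I s) (a' := S' s) (hS s hs') (hI' s hs')
    calc ‖F s - F' s - G s‖ = |β * (S s * I s - S' s * I' s) + r s * (S s - S' s)| := by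
          rw [Real.norm_eq_abs]; congr 1; ring
      _ ≤ |β| * (B * (|S s - S' s| + |I s - I' s|)) + 1 * |S s - S' s| := by
          refine (abs_add_le _ _).trans ?_
          rw [abs_mul, abs_mul]
          gcongr
          exact hrs hs.1.le
      _ ≤ (|β| * B + 1) * (|S s - S' s| + |I s - I' s|) := by
          nlinarith [abs_nonneg (I s - I' s)]
  rw [hsplit]
  linarith [abs_sub (x - x' - ∫ s in 0..u, (F s - F' s - G s)) (∫ s in 0..u, G s),
    abs_sub (x - x') (∫ s in 0..u, (F s - F' s - G s))]

theorem abs_infected_sub_le (h : IsSIRSol β γ r x y S I) (h' : IsSIRSol β γ r' x' y' S' I')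
    (hS : ∀ t ∈ Icc 0 T, |S t| ≤ B) (hI' : ∀ t ∈ Icc 0 T, |I' t| ≤ B) {u : ℝ}
    (hu : u ∈ Icc 0 T) :
    |I u - I' u| ≤
      |y - y'| + (|β| * B + |γ|) * ∫ s in 0..u, (|S s - S' s| + |I s - I' s|) := by
  have hsub : uIcc 0 u ⊆ Ici 0 := fun s hs => (le_min le_rfl hu.1).trans hs.1
  set Φ : ℝ → ℝ := fun s => β * S s * I s - γ * I s
  set Φ' : ℝ → ℝ := fun s => β * S' s * I' s - γ * I' s
  have hsplit : I u - I' u = (y - y') + ∫ s in 0..u, (Φ s - Φ' s) := by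
    rw [intervalIntegral.integral_sub (h.intervalIntegrable_infected le_rfl hu.1)
      (h'.intervalIntegrable_infected le_rfl hu.1), h.2.2.2 u hu.1, h'.2.2.2 u hu.1]
    ring
  have hbound : |∫ s in 0..u, (Φ s - Φ' s)|
      ≤ (|β| * B + |γ|) * ∫ s in 0..u, (|S s - S' s| + |I s - I' s|) := by
    rw [← intervalIntegral.integral_const_mul]
    refine intervalIntegral.norm_integral_le_of_norm_le (f := fun s => Φ s - Φ' s)
      (g := fun s => (|β| * B + |γ|) * (|S s - S' s| + |I s - I' s|)) hu.1 ?_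
      (continuousOn_const.mul ((h.continuousOn_abs_sub_add_abs_sub h').mono
        hsub)).intervalIntegrable
    refine Eventually.of_forall fun s hs => ?_
    have hs' : s ∈ Icc 0 T := ⟨hs.1.le, hs.2.trans hu.2⟩
    have hprod := abs_mul_sub_mul_le (b := I s) (a' := S' s) (hS s hs') (hI' s hs')
    calc ‖Φ s - Φ' s‖ = |β * (S s * I s - S' s * I' s) - γ * (I s - I' s)| := by
          rw [Real.norm_eq_abs]; congr 1; ring
      _ ≤ |β| * (B * (|S s - S' s| + |I s - I' s|)) + |γ| * |I s - I' s| := by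
          refine (abs_sub _ _).trans ?_
          rw [abs_mul, abs_mul]
          gcongr
      _ ≤ (|β| * B + |γ|) * (|S s - S' s| + |I s - I' s|) := by
          nlinarith [abs_nonneg (S s - S' s), abs_nonneg γ]
  rw [hsplit]
  linarith [abs_add_le (y - y') (∫ s in 0..u, (Φ s - Φ' s))]

theorem abs_sub_add_abs_sub_le (h : IsSIRSol β γ r x y S I) (h' : IsSIRSol β γ r' x' y' S' I')
    (hr : Admissible r) (hr' : Admissible r') (hS : ∀ t ∈ Icc 0 T, |S t| ≤ B)
    (hI' : ∀ t ∈ Icc 0 T, |I' t| ≤ B) {ε : ℝ}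
    (hε : ∀ t ∈ Icc 0 T, |x - x'| + |y - y'| + |∫ s in 0..t, (r s - r' s) * S' s| ≤ ε) :
    ∀ t ∈ Icc 0 T,
      |S t - S' t| + |I t - I' t| ≤ ε * exp ((2 * |β| * B + 1 + |γ|) * T) := by
  intro t ht
  have hT : (0 : ℝ) ∈ Icc 0 T := ⟨le_rfl, ht.1.trans ht.2⟩
  have hB : 0 ≤ B := (abs_nonneg _).trans (hS 0 hT)
  have hε0 : 0 ≤ ε := le_trans (by positivity) (hε 0 hT)
  have hgronwall := le_mul_exp_of_le_add_mul_integral (δ := ε) (K := 2 * |β| * B + 1 + |γ|)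
    (by positivity)
    ((h.continuousOn_abs_sub_add_abs_sub h').mono Icc_subset_Ici_self) (fun u hu => ?_) t ht
  · calc |S t - S' t| + |I t - I' t|
        _ ≤ ε * exp ((2 * |β| * B + 1 + |γ|) * (t - 0)) := hgronwall
        _ ≤ ε * exp ((2 * |β| * B + 1 + |γ|) * T) := by gcongr; linarith [ht.2]
  · linarith [h.abs_susceptible_sub_le h' hr hr' hS hI' hu, h.abs_infected_sub_le h' hS hI' hu,
      hε u hu]

end IsSIRSol

theorem controlled_SIR_stability_general
    (β γ : ℝ) (hβ : 0 < β)
    (x y : ℕ → ℝ) (xl yl : ℝ)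
    (hx0 : ∀ k, 0 ≤ x k) (hy0 : ∀ k, 0 ≤ y k)
    (r : ℕ → ℝ → ℝ) (rl : ℝ → ℝ)
    (hr : ∀ k, Admissible (r k)) (hrl : Admissible rl)
    (hxconv : Tendsto x atTop (𝓝 xl)) (hyconv : Tendsto y atTop (𝓝 yl))
    (hweak : ∀ g : ℝ → ℝ, Integrable g (volume.restrict (Ici 0)) →
      Tendsto (fun k => ∫ t in Ici (0:ℝ), g t * r k t) atTop
        (𝓝 (∫ t in Ici (0:ℝ), g t * rl t)))
    (S I : ℕ → ℝ → ℝ) (hsol : ∀ k, IsSIRSol β γ (r k) (x k) (y k) (S k) (I k))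
    (Sl Il : ℝ → ℝ) (hsoll : IsSIRSol β γ rl xl yl Sl Il) :
    ∀ T : ℝ, 0 < T →
      TendstoUniformlyOn (fun k t => S k t) Sl atTop (Icc 0 T) ∧
      TendstoUniformlyOn (fun k t => I k t) Il atTop (Icc 0 T) := by
  intro T _
  have hsub : Icc 0 T ⊆ Ici (0 : ℝ) := Icc_subset_Ici_self
  obtain ⟨X, hX⟩ := hxconv.bddAbove_range
  have hSk : ∀ k, ∀ t ∈ Icc 0 T, |S k t| ≤ X := fun k t ht =>
    ((hsol k).abs_susceptible_le hβ.le (hr k) (hx0 k) (hy0 k) ht.1).trans (hX (mem_range_self k))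
  obtain ⟨C, hC⟩ := isCompact_Icc.exists_bound_of_continuousOn (hsoll.2.1.mono hsub)
  set E := exp ((2 * |β| * max X C + 1 + |γ|) * T)
  have hG := tendstoUniformlyOn_integral_sub_mul_of_weakStar hr hrl hweak (hsoll.1.mono hsub)
  have key :
      ∀ ε > 0, ∀ᶠ k in atTop, ∀ t ∈ Icc 0 T, |S k t - Sl t| + |I k t - Il t| < ε := by
    intro ε hε
    have hη : 0 < ε / (4 * E) := by positivity
    filter_upwards [Metric.tendsto_nhds.1 hxconv _ hη, Metric.tendsto_nhds.1 hyconv _ hη,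
      Metric.tendstoUniformlyOn_iff.1 hG _ hη] with k hxk hyk hGk t ht
    refine ((hsol k).abs_sub_add_abs_sub_le hsoll (hr k) hrl
      (fun t ht => (hSk k t ht).trans (le_max_left _ _))
      (fun t ht => (hC t ht).trans (le_max_right _ _)) (ε := 3 * (ε / (4 * E)))
      (fun t ht => ?_) t ht).trans_lt ?_
    · have := hGk t ht
      rw [Pi.zero_apply, dist_zero_left, Real.norm_eq_abs] at this
      rw [Real.dist_eq] at hxk hyk
      linarith
    · have hE : 0 < E := exp_pos _
      field_simp
      linarith
  exact ⟨tendstoUniformlyOn_of_abs_sub_le key fun k t _ => le_add_of_nonneg_right (abs_nonneg _),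
    tendstoUniformlyOn_of_abs_sub_le key fun k t _ => le_add_of_nonneg_left (abs_nonneg _)⟩

/-- Stability of solutions of the controlled SIR system under
convergence of the initial data and weak* convergence of the controls. -/
theorem controlled_SIR_stability
    (β γ : ℝ) (hβ : 0 < β) (hγ : 0 < γ)
    (x y : ℕ → ℝ) (xl yl : ℝ)
    (hx0 : ∀ k, 0 ≤ x k) (hy0 : ∀ k, 0 ≤ y k) (hxl : 0 ≤ xl) (hyl : 0 ≤ yl)
    (r : ℕ → ℝ → ℝ) (rl : ℝ → ℝ)
    (hr : ∀ k, Admissible (r k)) (hrl : Admissible rl)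
    (hxconv : Tendsto x atTop (𝓝 xl)) (hyconv : Tendsto y atTop (𝓝 yl))
    (hweak : ∀ g : ℝ → ℝ, Integrable g (volume.restrict (Ici 0)) →
      Tendsto (fun k => ∫ t in Ici (0:ℝ), g t * r k t) atTop
        (𝓝 (∫ t in Ici (0:ℝ), g t * rl t)))
    (S I : ℕ → ℝ → ℝ) (hsol : ∀ k, IsSIRSol β γ (r k) (x k) (y k) (S k) (I k))
    (Sl Il : ℝ → ℝ) (hsoll : IsSIRSol β γ rl xl yl Sl Il) :
    ∀ T : ℝ, 0 < T →
      TendstoUniformlyOn (fun k t => S k t) Sl atTop (Icc 0 T) ∧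
      TendstoUniformlyOn (fun k t => I k t) Il atTop (Icc 0 T) :=
  controlled_SIR_stability_general β γ hβ x y xl yl hx0 hy0 r rl hr hrl hxconv hyconv hweak S I hsol
    Sl Il hsoll
end
end

section
/- Let N, δ > 0 with μ + δ < N. There exists ε > 0 such that for every admissible control r and every (x,y) in the triangle T_{N,δ}, one has γ − β S^r(u^r(x,y)) ≥ ε, where S^r, I^r is the solution of the controlled SIR system with control r and initial data (x,y) and u^r(x,y) is the corresponding eradication time. -/
open MeasureTheory Set Filter Topology
open scoped Classical

noncomputable section

/-! While `I ≥ μ`, the susceptibles stay nonnegative and decrease, and the removal rate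
`β S I ≥ β μ S` gives `β μ t S(t) ≤ x`. So if `β S(u) > γ/2` at the eradication time `u`, then
`u < 2x/(μγ)`. Put `ε = γ - β S(u)`; as `S` decreases, `γ - β S ≤ ε` on `[0,u]`, so `I` falls by at
most `ε (x + y) u` before `u`. Since `I` falls from `y ≥ μ + δ` to `μ`, we get `ε ≥ δμγ/(2N²)`.
The same decay of `S` makes `I` decrease linearly once `t ≥ 2x/(μγ)`, so `I` does reach `μ` and
the eradication time is a genuine first hitting time rather than the junk value `sInf ∅ = 0`. -/

theorem ContinuousOn.nonneg_of_le_of_nonpos {f : ℝ → ℝ} {a b : ℝ}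
    (hf : ContinuousOn f (Icc a b)) (ha : 0 ≤ f a)
    (hmono : ∀ s t, a ≤ s → s ≤ t → t ≤ b → (∀ u ∈ Icc s t, f u ≤ 0) → f s ≤ f t) :
    ∀ t ∈ Icc a b, 0 ≤ f t := by
  intro t₀ ht₀
  by_contra! hneg
  have hf₀ : ContinuousOn f (Icc a t₀) := hf.mono (Icc_subset_Icc le_rfl ht₀.2)
  set Z := Icc a t₀ ∩ f ⁻¹' {0}
  have hZ_bdd : BddAbove Z := ⟨t₀, fun u hu => hu.1.2⟩
  have hZ_ne : Z.Nonempty := intermediate_value_Icc' ht₀.1 hf₀ ⟨hneg.le, ha⟩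
  have hlast : sSup Z ∈ Z :=
    (hf₀.preimage_isClosed_of_isClosed isClosed_Icc isClosed_singleton).csSup_mem hZ_ne hZ_bdd
  have hnonpos : ∀ u ∈ Icc (sSup Z) t₀, f u ≤ 0 := by
    intro u hu
    by_contra! hpos
    have hau : a ≤ u := hlast.1.1.trans hu.1
    obtain ⟨v, hv, hfv⟩ := intermediate_value_Icc' hu.2
      (hf₀.mono (Icc_subset_Icc hau le_rfl)) ⟨hneg.le, hpos.le⟩
    have hv_le : v ≤ sSup Z := le_csSup hZ_bdd ⟨⟨hau.trans hv.1, hv.2⟩, hfv⟩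
    have huv : u = v := le_antisymm hv.1 (hv_le.trans hu.1)
    exact hpos.ne' (huv ▸ hfv)
  have := hmono _ _ hlast.1.1 hlast.1.2 ht₀.2 hnonpos
  rw [show f (sSup Z) = 0 from hlast.2] at this
  linarith

section HittingTime

variable {f : ℝ → ℝ} {c : ℝ}

theorem sInf_hitting_mem (hf : ContinuousOn f (Ici 0)) (hhit : ∃ t, 0 ≤ t ∧ f t = c) :
    sInf {t | 0 ≤ t ∧ f t = c} ∈ {t | 0 ≤ t ∧ f t = c} :=
  (hf.preimage_isClosed_of_isClosed isClosed_Ici isClosed_singleton).csInf_mem hhit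
    ⟨0, fun _ ht => ht.1⟩

theorem le_of_mem_Icc_sInf_hitting (hf : ContinuousOn f (Ici 0)) (h0 : c ≤ f 0) {t : ℝ}
    (ht : t ∈ Icc 0 (sInf {t | 0 ≤ t ∧ f t = c})) : c ≤ f t := by
  by_contra! hlt
  obtain ⟨s, hs, hfs⟩ :=
    intermediate_value_Icc' ht.1 (hf.mono fun _ hu => hu.1) ⟨hlt.le, h0⟩
  have hs_ge : sInf {t | 0 ≤ t ∧ f t = c} ≤ s := csInf_le ⟨0, fun _ hu => hu.1⟩ ⟨hs.1, hfs⟩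
  have hts : t = s := le_antisymm (ht.2.trans hs_ge) hs.2
  exact hlt.ne (hts ▸ hfs)

end HittingTime

theorem Admissible.ae_restrict_Icc {r : ℝ → ℝ} (hr : Admissible r) {s t : ℝ} (hs : 0 ≤ s) :
    ∀ᵐ u ∂volume.restrict (Icc s t), u ∈ Icc s t ∧ r u ∈ Icc (0 : ℝ) 1 := by
  filter_upwards [ae_restrict_of_ae hr.2, ae_restrict_mem measurableSet_Icc] with u hru hu
  exact ⟨hu, hru (hs.trans hu.1)⟩

theorem isSIRSol_sirS_sirI {β γ x y : ℝ} {r : ℝ → ℝ}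
    (h : ∃ p : (ℝ → ℝ) × (ℝ → ℝ), IsSIRSol β γ r x y p.1 p.2) :
    IsSIRSol β γ r x y (sirS β γ r x y) (sirI β γ r x y) := by
  rw [sirS, sirI, dif_pos h, dif_pos h]
  exact h.choose_spec

theorem sirS_of_not_exists {β γ x y : ℝ} {r : ℝ → ℝ}
    (h : ¬∃ p : (ℝ → ℝ) × (ℝ → ℝ), IsSIRSol β γ r x y p.1 p.2) : sirS β γ r x y = 0 := by
  rw [sirS, dif_neg h]

namespace IsSIRSol

variable {β γ μ x y : ℝ} {r : ℝ → ℝ} {S I : ℝ → ℝ}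

theorem S_zero (hsol : IsSIRSol β γ r x y S I) : S 0 = x := by
  simpa using hsol.2.2.1 0 le_rfl

theorem I_zero (hsol : IsSIRSol β γ r x y S I) : I 0 = y := by
  simpa using hsol.2.2.2 0 le_rfl

section Increments

variable {s t : ℝ}

theorem intervalIntegrable_infection (hsol : IsSIRSol β γ r x y S I) (hs : 0 ≤ s) (hst : s ≤ t) :
    IntervalIntegrable (fun u => β * S u * I u - γ * I u) volume s t := by
  have hsub : uIcc s t ⊆ Ici 0 := by
    rw [uIcc_of_le hst]
    exact fun u hu => hs.trans hu.1
  exact ContinuousOn.intervalIntegrable <|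
    ((continuousOn_const.mul (hsol.1.mono hsub)).mul (hsol.2.1.mono hsub)).sub
      (continuousOn_const.mul (hsol.2.1.mono hsub))

theorem intervalIntegrable_removal (hsol : IsSIRSol β γ r x y S I) (hr : Admissible r)
    (hs : 0 ≤ s) (hst : s ≤ t) :
    IntervalIntegrable (fun u => β * S u * I u + r u * S u) volume s t := by
  rw [intervalIntegrable_iff_integrableOn_Icc_of_le hst]
  have hsub : Icc s t ⊆ Ici 0 := fun u hu => hs.trans hu.1
  have hS : ContinuousOn S (Icc s t) := hsol.1.mono hsub
  have hr_int : IntegrableOn r (Icc s t) :=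
    Measure.integrableOn_of_bounded (M := 1) measure_Icc_lt_top.ne hr.1.aestronglyMeasurable <|
      (hr.ae_restrict_Icc hs).mono fun u hu => by
        rw [Real.norm_eq_abs, abs_le]
        constructor <;> linarith [hu.2.1, hu.2.2]
  exact (((continuousOn_const.mul hS).mul (hsol.2.1.mono hsub)).integrableOn_compact
    isCompact_Icc).add (hr_int.mul_continuousOn hS isCompact_Icc)

theorem S_sub_S (hsol : IsSIRSol β γ r x y S I) (hr : Admissible r) (hs : 0 ≤ s) (hst : s ≤ t) :
    S s - S t = ∫ u in s..t, (β * S u * I u + r u * S u) := by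
  rw [hsol.2.2.1 s hs, hsol.2.2.1 t (hs.trans hst),
    ← intervalIntegral.integral_add_adjacent_intervals
      (hsol.intervalIntegrable_removal hr le_rfl hs) (hsol.intervalIntegrable_removal hr hs hst)]
  ring

theorem I_sub_I (hsol : IsSIRSol β γ r x y S I) (hs : 0 ≤ s) (hst : s ≤ t) :
    I t - I s = ∫ u in s..t, (β * S u * I u - γ * I u) := by
  rw [hsol.2.2.2 s hs, hsol.2.2.2 t (hs.trans hst),
    ← intervalIntegral.integral_add_adjacent_intervals
      (hsol.intervalIntegrable_infection le_rfl hs) (hsol.intervalIntegrable_infection hs hst)]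
  ring

theorem le_S_sub_S (hsol : IsSIRSol β γ r x y S I) (hr : Admissible r) (hs : 0 ≤ s) (hst : s ≤ t)
    {g : ℝ} (hg : ∀ u ∈ Icc s t, ∀ ρ ∈ Icc (0 : ℝ) 1, g ≤ β * S u * I u + ρ * S u) :
    g * (t - s) ≤ S s - S t := by
  rw [hsol.S_sub_S hr hs hst]
  simpa [mul_comm] using intervalIntegral.integral_mono_ae_restrict hst intervalIntegrable_const
    (hsol.intervalIntegrable_removal hr hs hst)
    ((hr.ae_restrict_Icc hs).mono fun u hu => hg u hu.1 _ hu.2)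

theorem S_sub_S_le (hsol : IsSIRSol β γ r x y S I) (hr : Admissible r) (hs : 0 ≤ s) (hst : s ≤ t)
    {g : ℝ} (hg : ∀ u ∈ Icc s t, ∀ ρ ∈ Icc (0 : ℝ) 1, β * S u * I u + ρ * S u ≤ g) :
    S s - S t ≤ g * (t - s) := by
  rw [hsol.S_sub_S hr hs hst]
  simpa [mul_comm] using intervalIntegral.integral_mono_ae_restrict hst
    (hsol.intervalIntegrable_removal hr hs hst) intervalIntegrable_const
    ((hr.ae_restrict_Icc hs).mono fun u hu => hg u hu.1 _ hu.2)

theorem le_I_sub_I (hsol : IsSIRSol β γ r x y S I) (hs : 0 ≤ s) (hst : s ≤ t)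
    {g : ℝ} (hg : ∀ u ∈ Icc s t, g ≤ β * S u * I u - γ * I u) :
    g * (t - s) ≤ I t - I s := by
  rw [hsol.I_sub_I hs hst]
  simpa [mul_comm] using intervalIntegral.integral_mono_on hst intervalIntegrable_const
    (hsol.intervalIntegrable_infection hs hst) hg

theorem I_sub_I_le (hsol : IsSIRSol β γ r x y S I) (hs : 0 ≤ s) (hst : s ≤ t)
    {g : ℝ} (hg : ∀ u ∈ Icc s t, β * S u * I u - γ * I u ≤ g) :
    I t - I s ≤ g * (t - s) := by
  rw [hsol.I_sub_I hs hst]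
  simpa [mul_comm] using intervalIntegral.integral_mono_on hst
    (hsol.intervalIntegrable_infection hs hst) intervalIntegrable_const hg

end Increments

section Dynamics

variable {T : ℝ}

theorem S_nonneg (hsol : IsSIRSol β γ r x y S I) (hr : Admissible r) (hβ : 0 ≤ β) (hx : 0 ≤ x)
    (hI : ∀ t ∈ Icc 0 T, 0 ≤ I t) : ∀ t ∈ Icc 0 T, 0 ≤ S t := by
  refine (hsol.1.mono Icc_subset_Ici_self).nonneg_of_le_of_nonpos (hsol.S_zero ▸ hx) ?_
  intro s t hs hst htT hS
  have := hsol.S_sub_S_le hr hs hst (g := 0) fun u hu ρ hρ => by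
    have hIu := hI u ⟨hs.trans hu.1, hu.2.trans htT⟩
    nlinarith [hS u hu, mul_nonneg hβ hIu, hρ.1]
  linarith

theorem S_antitoneOn (hsol : IsSIRSol β γ r x y S I) (hr : Admissible r) (hβ : 0 ≤ β)
    (hx : 0 ≤ x) (hI : ∀ t ∈ Icc 0 T, 0 ≤ I t) : AntitoneOn S (Icc 0 T) := by
  intro s hs t ht hst
  have := hsol.le_S_sub_S hr hs.1 hst (g := 0) fun u hu ρ hρ => by
    have hu' : u ∈ Icc 0 T := ⟨hs.1.trans hu.1, hu.2.trans ht.2⟩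
    have hSu := hsol.S_nonneg hr hβ hx hI u hu'
    exact add_nonneg (mul_nonneg (mul_nonneg hβ hSu) (hI u hu')) (mul_nonneg hρ.1 hSu)
  linarith

theorem S_add_I_le (hsol : IsSIRSol β γ r x y S I) (hr : Admissible r) (hβ : 0 ≤ β)
    (hγ : 0 ≤ γ) (hx : 0 ≤ x) (hI : ∀ t ∈ Icc 0 T, 0 ≤ I t) :
    ∀ t ∈ Icc 0 T, S t + I t ≤ x + y := by
  intro t ht
  have hrate : (∫ u in (0 : ℝ)..t, (β * S u * I u - γ * I u)) ≤
      ∫ u in (0 : ℝ)..t, (β * S u * I u + r u * S u) :=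
    intervalIntegral.integral_mono_ae_restrict ht.1 (hsol.intervalIntegrable_infection le_rfl ht.1)
      (hsol.intervalIntegrable_removal hr le_rfl ht.1) <|
      (hr.ae_restrict_Icc le_rfl).mono fun u hu => by
        have hu' : u ∈ Icc 0 T := ⟨hu.1.1, hu.1.2.trans ht.2⟩
        nlinarith [mul_nonneg hγ (hI u hu'), mul_nonneg hu.2.1 (hsol.S_nonneg hr hβ hx hI u hu')]
  have hS_drop := hsol.S_sub_S hr le_rfl ht.1
  have hI_rise := hsol.I_sub_I le_rfl ht.1
  rw [hsol.S_zero] at hS_drop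
  rw [hsol.I_zero] at hI_rise
  linarith

theorem mul_S_le (hsol : IsSIRSol β γ r x y S I) (hr : Admissible r) (hβ : 0 ≤ β) (hμ : 0 ≤ μ)
    (hx : 0 ≤ x) (hI : ∀ t ∈ Icc 0 T, μ ≤ I t) :
    ∀ t ∈ Icc 0 T, β * μ * t * S t ≤ x - S t := by
  have hI₀ : ∀ t ∈ Icc 0 T, 0 ≤ I t := fun t ht => hμ.trans (hI t ht)
  intro t ht
  have := hsol.le_S_sub_S hr le_rfl ht.1 (g := β * μ * S t) fun u hu ρ hρ => by
    have hu' : u ∈ Icc 0 T := ⟨hu.1, hu.2.trans ht.2⟩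
    have hSu := hsol.S_nonneg hr hβ hx hI₀ u hu'
    have hStu : S t ≤ S u := hsol.S_antitoneOn hr hβ hx hI₀ hu' ht hu.2
    nlinarith [mul_le_mul_of_nonneg_left hStu (mul_nonneg hβ hμ),
      mul_le_mul_of_nonneg_left (hI u hu') (mul_nonneg hβ hSu), mul_nonneg hρ.1 hSu]
  rw [hsol.S_zero] at this
  linarith

theorem le_of_forall_le_I (hsol : IsSIRSol β γ r x y S I) (hr : Admissible r) (hβ : 0 ≤ β)
    (hγ : 0 < γ) (hμ : 0 < μ) (hx : 0 ≤ x) (hT : 0 ≤ T) (hI : ∀ t ∈ Icc 0 T, μ ≤ I t) :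
    T ≤ 2 * (2 * x + y) / (μ * γ) := by
  have hI₀ : ∀ t ∈ Icc 0 T, 0 ≤ I t := fun t ht => hμ.le.trans (hI t ht)
  have hy : μ ≤ y := hsol.I_zero ▸ hI 0 ⟨le_rfl, hT⟩
  set T₀ := 2 * x / (μ * γ)
  have hT₀ : 0 ≤ T₀ := by positivity
  have hsplit : 2 * (2 * x + y) / (μ * γ) = T₀ + 2 * (x + y) / (μ * γ) := by ring
  rw [hsplit]
  rcases le_or_gt T T₀ with hTT₀ | hT₀T
  · linarith [div_nonneg (by linarith : 0 ≤ 2 * (x + y)) (by positivity : 0 ≤ μ * γ)]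
  -- past `T₀` the decay of `S` gives `β S ≤ γ/2`, so `I` drops at rate at least `γ μ / 2`
  have hβS : ∀ u ∈ Icc T₀ T, β * S u ≤ γ / 2 := by
    intro u hu
    have hu' : u ∈ Icc 0 T := ⟨hT₀.trans hu.1, hu.2⟩
    have hxu : 2 * x ≤ u * (μ * γ) := (div_le_iff₀ (by positivity)).mp hu.1
    have hdecay := hsol.mul_S_le hr hβ hμ.le hx hI u hu'
    have hSu := hsol.S_nonneg hr hβ hx hI₀ u hu'
    by_contra! hlarge
    have := mul_le_mul_of_nonneg_left hlarge.le (mul_nonneg hμ.le hu'.1)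
    have hSu0 : S u ≤ 0 := by nlinarith
    nlinarith
  have hdrop := hsol.I_sub_I_le hT₀ hT₀T.le (g := -(γ / 2 * μ)) fun u hu => by
    have hIu := hI u ⟨hT₀.trans hu.1, hu.2⟩
    nlinarith [mul_le_mul_of_nonneg_right (hβS u hu) (hμ.le.trans hIu)]
  have hIT₀ := hsol.S_add_I_le hr hβ hγ.le hx hI₀ T₀ ⟨hT₀, hT₀T.le⟩
  have hST₀ := hsol.S_nonneg hr hβ hx hI₀ T₀ ⟨hT₀, hT₀T.le⟩
  have hIT := hI T ⟨hT, le_rfl⟩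
  rw [← sub_le_iff_le_add', le_div_iff₀ (by positivity)]
  nlinarith

theorem exists_I_eq (hsol : IsSIRSol β γ r x y S I) (hr : Admissible r) (hβ : 0 ≤ β)
    (hγ : 0 < γ) (hμ : 0 < μ) (hx : 0 ≤ x) (hy : μ ≤ y) : ∃ t, 0 ≤ t ∧ I t = μ := by
  by_contra! hne
  have hI : ∀ t, 0 ≤ t → μ ≤ I t := by
    intro t ht
    by_contra! hlt
    obtain ⟨s, hs, hIs⟩ := intermediate_value_Icc' ht (hsol.2.1.mono fun _ hu => hu.1)
      ⟨hlt.le, hsol.I_zero ▸ hy⟩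
    exact hne s hs.1 hIs
  have hbound : 0 ≤ 2 * (2 * x + y) / (μ * γ) :=
    div_nonneg (by linarith) (by positivity)
  have := hsol.le_of_forall_le_I hr hβ hγ hμ hx (T := 2 * (2 * x + y) / (μ * γ) + 1)
    (by linarith) fun t ht => hI t ht.1
  linarith

theorem min_le_gap_of_hitting (hsol : IsSIRSol β γ r x y S I) (hr : Admissible r) (hβ : 0 ≤ β)
    (hγ : 0 < γ) (hμ : 0 < μ) (hx : 0 < x) (hy : μ < y) (hT : 0 ≤ T)
    (hI : ∀ t ∈ Icc 0 T, μ ≤ I t) (hIT : I T = μ) :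
    min (γ / 2) ((y - μ) * μ * γ / (2 * x * (x + y))) ≤ γ - β * S T := by
  have hI₀ : ∀ t ∈ Icc 0 T, 0 ≤ I t := fun t ht => hμ.le.trans (hI t ht)
  have hTmem : T ∈ Icc 0 T := ⟨hT, le_rfl⟩
  set ε := γ - β * S T
  rw [min_le_iff, or_iff_not_imp_left, not_le]
  intro hε
  have hST : 0 < S T := by
    by_contra! h
    nlinarith [hsol.S_nonneg hr hβ hx.le hI₀ T hTmem]
  have hTx : μ * γ * T < 2 * x := by
    nlinarith [hsol.mul_S_le hr hβ hμ.le hx.le hI T hTmem, mul_nonneg hμ.le hT]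
  -- `ε` may a priori be negative, hence the bound is run with `max ε 0`
  have hrise := hsol.le_I_sub_I le_rfl hT (g := -(max ε 0 * (x + y))) fun u hu => by
    have hSTu : S T ≤ S u := hsol.S_antitoneOn hr hβ hx.le hI₀ hu hTmem hu.2
    have hIu := hI₀ u hu
    have hIxy : I u ≤ x + y := by
      linarith [hsol.S_add_I_le hr hβ hγ.le hx.le hI₀ u hu, hsol.S_nonneg hr hβ hx.le hI₀ u hu]
    have hrate : γ - β * S u ≤ max ε 0 :=
      le_max_of_le_left (by linarith [mul_le_mul_of_nonneg_left hSTu hβ])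
    nlinarith [mul_le_mul_of_nonneg_right hrate hIu,
      mul_le_mul_of_nonneg_left hIxy (le_max_right ε 0)]
  rw [hIT, hsol.I_zero] at hrise
  have hyμ : 0 < y - μ := by linarith
  have hxy : 0 < x + y := by linarith
  have hgap_pos : 0 < (y - μ) * μ * γ / (2 * x * (x + y)) := by positivity
  have hgap_le : (y - μ) * μ * γ / (2 * x * (x + y)) ≤ max ε 0 := by
    rw [div_le_iff₀ (by positivity)]
    nlinarith [mul_le_mul_of_nonneg_left hTx.le (mul_nonneg (le_max_right ε 0) hxy.le)]
  exact (le_max_iff.mp hgap_le).resolve_right hgap_pos.not_ge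

end Dynamics

end IsSIRSol

/-- Uniform nondegeneracy at eradication: on the triangle
`T_{N,δ}` there is `ε > 0` with `γ - β S^r(u^r(x,y)) ≥ ε` for all admissible `r`. -/
theorem uniform_nondegeneracy
    (β γ μ : ℝ) (hβ : 0 < β) (hγ : 0 < γ) (hμ : 0 < μ)
    (N δ : ℝ) (hδ : 0 < δ) (hN : μ + δ < N) :
    ∃ ε : ℝ, 0 < ε ∧
      ∀ r : ℝ → ℝ, Admissible r → ∀ p ∈ Triangle μ N δ,
        ε ≤ γ - β * sirS β γ r p.1 p.2 (eradTime β γ μ r p.1 p.2) := by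
  have hN₀ : 0 < N := by linarith
  refine ⟨min (γ / 2) (δ * μ * γ / (2 * N * N)), by positivity, ?_⟩
  rintro r hr ⟨x, y⟩ ⟨hx, hy, hxy⟩
  dsimp only at hx hy hxy ⊢
  by_cases hex : ∃ p : (ℝ → ℝ) × (ℝ → ℝ), IsSIRSol β γ r x y p.1 p.2
  · have hx₀ : 0 < x := by linarith
    have hμy : μ < y := by linarith
    have hyμ : 0 < y - μ := sub_pos.mpr hμy
    have hxy₀ : 0 < x + y := by linarith
    have hsol := isSIRSol_sirS_sirI hex
    have hcont : ContinuousOn (sirI β γ r x y) (Ici 0) := hsol.2.1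
    obtain ⟨hu₀, hIu⟩ := sInf_hitting_mem hcont
      (hsol.exists_I_eq hr hβ.le hγ hμ hx₀.le hμy.le)
    calc min (γ / 2) (δ * μ * γ / (2 * N * N))
        ≤ min (γ / 2) ((y - μ) * μ * γ / (2 * x * (x + y))) := by
          gcongr <;> linarith
      _ ≤ _ := hsol.min_le_gap_of_hitting hr hβ.le hγ hμ hx₀ hμy hu₀
          (fun t => le_of_mem_Icc_sInf_hitting hcont (by rw [hsol.I_zero]; exact hμy.le)) hIu
  · rw [sirS_of_not_exists hex, Pi.zero_apply, mul_zero, sub_zero]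
    exact (min_le_left _ _).trans (by linarith)
end
end
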